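/- For any three quantum states ρ, σ, τ on the same finite-dimensional Hilbert space, arccos F(ρ,τ) ≤ arccos F(ρ,σ) + arccos F(σ,τ), where F is the Uhlmann fidelity. Equivalently, if arccos F(ρ,σ) + arccos F(σ,τ) ≤ π/2, then F(ρ,τ) ≥ cos(arccos F(ρ,σ) + arccos F(σ,τ)). -/

import Mathlib

open Matrix Kronecker
open scoped ComplexOrder
open scoped Classical in
noncomputable def msqrt {n : Type*} [Fintype n] [DecidableEq n] (A : Matrix n n ℂ) : Matrix n n ℂ :=
  if h : A.PosSemidef then
    (h.1.eigenvectorUnitary : Matrix n n ℂ) * diagonal ((↑) ∘ (√·) ∘ h.1.eigenvalues) *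
      (star h.1.eigenvectorUnitary : Matrix n n ℂ) else 0
noncomputable def fid {n : Type*} [Fintype n] [DecidableEq n] (ρ σ : Matrix n n ℂ) : ℝ :=
  ((msqrt (msqrt ρ * σ * msqrt ρ)).trace).re
def IsState {n : Type*} [Fintype n] [DecidableEq n] (ρ : Matrix n n ℂ) : Prop :=
  ρ.PosSemidef ∧ ρ.trace = 1
/-- Complete positivity via Kraus decomposition. -/
def IsCP {n m : Type*} [Fintype n] [DecidableEq n] [Fintype m] [DecidableEq m]
    (Φ : Matrix n n ℂ → Matrix m m ℂ) : Prop :=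
  ∃ (k : ℕ) (K : Fin k → Matrix m n ℂ), ∀ ρ, Φ ρ = ∑ i, K i * ρ * (K i)ᴴ


/-!
The matrices `√ρ U`, `U` unitary, are purifications of `ρ`; flattened, they are unit vectors of
the Hilbert–Schmidt space. Polar decomposition gives `Re Tr (W M) ≤ Tr |M|` for unitary `W`, with
equality for a suitable `W`; since `|√σ √ρ| = √(√ρ σ √ρ)`, this says
`Re ⟪√ρ U, √σ V⟫ ≤ F(ρ, σ)`, and for each `U` some `V` attains equality (Uhlmann).
Picking a purification `x` of `ρ`, then `y` of `σ` with `Re ⟪x, y⟫ = F(ρ, σ)`, then `z` of `τ` with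
`Re ⟪y, z⟫ = F(σ, τ)`, the Bures angle `arccos F(ρ, τ) ≤ arccos Re ⟪x, z⟫` is bounded by the
triangle inequality for angles between the unit vectors `x`, `y`, `z`.
-/

section MatrixSqrt

variable {m : Type*} [Fintype m] [DecidableEq m]

lemma msqrt_of_posSemidef {A : Matrix m m ℂ} (hA : A.PosSemidef) :
    msqrt A = (hA.1.eigenvectorUnitary : Matrix m m ℂ) *
      diagonal ((↑) ∘ (√·) ∘ hA.1.eigenvalues) * (star hA.1.eigenvectorUnitary : Matrix m m ℂ) :=
  dif_pos hA

open scoped MatrixOrder in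
lemma msqrt_eq_cfcSqrt {A : Matrix m m ℂ} (hA : A.PosSemidef) : msqrt A = CFC.sqrt A := by
  rw [CFC.sqrt_eq_real_sqrt A hA.nonneg, cfcₙ_eq_cfc, hA.1.cfc_eq, msqrt_of_posSemidef hA]
  simp [IsHermitian.cfc, Unitary.conjStarAlgAut_apply]

open scoped MatrixOrder in
lemma posSemidef_msqrt (A : Matrix m m ℂ) : (msqrt A).PosSemidef := by
  by_cases hA : A.PosSemidef
  · rw [msqrt_eq_cfcSqrt hA]
    exact nonneg_iff_posSemidef.mp (CFC.sqrt_nonneg A)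
  · rw [msqrt, dif_neg hA]
    exact PosSemidef.zero

lemma conjTranspose_msqrt (A : Matrix m m ℂ) : (msqrt A)ᴴ = msqrt A :=
  (posSemidef_msqrt A).1

open scoped MatrixOrder in
lemma msqrt_mul_msqrt {A : Matrix m m ℂ} (hA : A.PosSemidef) : msqrt A * msqrt A = A := by
  rw [msqrt_eq_cfcSqrt hA]
  exact CFC.sqrt_mul_sqrt_self A hA.nonneg

end MatrixSqrt

section HilbertSchmidt

variable {m n : Type*} [Fintype m] [Fintype n]

noncomputable def hsVec (X : Matrix m n ℂ) : EuclideanSpace ℂ (n × m) := WithLp.toLp 2 X.vec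

lemma inner_hsVec (X Y : Matrix m n ℂ) : inner ℝ (hsVec X) (hsVec Y) = (Xᴴ * Y).trace.re := by
  rw [← star_vec_dotProduct_vec]
  simp [hsVec, PiLp.inner_apply, dotProduct, Complex.re_sum, mul_comm]

lemma norm_hsVec_sq (X : Matrix m n ℂ) : ‖hsVec X‖ ^ 2 = (Xᴴ * X).trace.re := by
  rw [← real_inner_self_eq_norm_sq, inner_hsVec]

lemma norm_hsVec_mul_unitary [DecidableEq n] (X : Matrix m n ℂ) {U : Matrix n n ℂ}
    (hU : U ∈ unitaryGroup n ℂ) : ‖hsVec (X * U)‖ = ‖hsVec X‖ := by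
  have hUU : U * Uᴴ = 1 := Unitary.mul_star_self_of_mem hU
  rw [← sq_eq_sq₀ (norm_nonneg _) (norm_nonneg _), norm_hsVec_sq, norm_hsVec_sq,
    conjTranspose_mul, Matrix.mul_assoc, trace_mul_comm, Matrix.mul_assoc, Matrix.mul_assoc,
    hUU, Matrix.mul_one]

omit [Fintype n] in
lemma inner_toLp_transpose_apply (N : Matrix m n ℂ) (j k : n) :
    inner ℂ (WithLp.toLp 2 (Nᵀ j)) (WithLp.toLp 2 (Nᵀ k)) = (Nᴴ * N) j k := by
  simp [PiLp.inner_apply, mul_apply, mul_comm]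

end HilbertSchmidt

section Polar

variable {m : Type*} [Fintype m] [DecidableEq m]

lemma exists_unitary_eq_mul_diagonal {N : Matrix m m ℂ} {s : m → ℝ}
    (hN : Nᴴ * N = diagonal (fun j => ((s j ^ 2 : ℝ) : ℂ))) :
    ∃ U ∈ unitaryGroup m ℂ, N = U * diagonal (fun j => (s j : ℂ)) := by
  -- `U` has the normalised nonzero columns of `N`, completed to an orthonormal basis.
  set w : m → EuclideanSpace ℂ m := fun j => ((s j : ℂ)⁻¹) • WithLp.toLp 2 (Nᵀ j)
  have hw : Orthonormal ℂ ({j | s j ≠ 0}.domRestrict w) := by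
    rw [orthonormal_iff_ite]
    rintro ⟨j, hj⟩ ⟨k, hk⟩
    change inner ℂ (w j) (w k) = _
    simp only [w, inner_smul_left, inner_smul_right, inner_toLp_transpose_apply, hN]
    by_cases hjk : j = k
    · subst hjk
      have hs : (s j : ℂ) ≠ 0 := by exact_mod_cast hj
      simp only [map_inv₀, Complex.conj_ofReal, Complex.ofReal_pow, diagonal_apply_eq, ↓reduceIte]
      field_simp
    · simp [hjk]
  obtain ⟨b, hb⟩ := hw.exists_orthonormalBasis_extension_of_card_eq (by simp)
  refine ⟨(EuclideanSpace.basisFun m ℂ).toBasis.toMatrix b,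
    (EuclideanSpace.basisFun m ℂ).toMatrix_orthonormalBasis_mem_unitary b, ?_⟩
  ext i j
  rw [mul_diagonal]
  by_cases hj : s j = 0
  · have hcol : WithLp.toLp 2 (Nᵀ j) = 0 := by
      rw [← inner_self_eq_zero (𝕜 := ℂ), inner_toLp_transpose_apply, hN]
      simp [hj]
    simpa [hj] using congrArg (·.ofLp i) hcol
  · have hs : (s j : ℂ) ≠ 0 := by exact_mod_cast hj
    simp only [Module.Basis.toMatrix_apply, hb j hj, w, map_smul, Finsupp.coe_smul, Pi.smul_apply,
      OrthonormalBasis.coe_toBasis_repr_apply, EuclideanSpace.basisFun_repr, transpose_apply,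
      smul_eq_mul]
    field_simp

lemma exists_unitary_eq_mul_msqrt (M : Matrix m m ℂ) :
    ∃ U ∈ unitaryGroup m ℂ, M = U * msqrt (Mᴴ * M) := by
  have hH := posSemidef_conjTranspose_mul_self M
  set V : Matrix m m ℂ := (hH.1.eigenvectorUnitary : Matrix m m ℂ)
  have hV : V ∈ unitaryGroup m ℂ := hH.1.eigenvectorUnitary.2
  have hMV : (M * V)ᴴ * (M * V) =
      diagonal (fun j => ((√(hH.1.eigenvalues j) ^ 2 : ℝ) : ℂ)) := by
    simp only [Real.sq_sqrt (hH.eigenvalues_nonneg _)]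
    rw [conjTranspose_mul, ← star_eq_conjTranspose, mul_assoc, ← mul_assoc Mᴴ, ← mul_assoc]
    simpa [Unitary.conjStarAlgAut_apply, Function.comp_def] using
      hH.1.conjStarAlgAut_star_eigenvectorUnitary
  obtain ⟨U, hU, hMVU⟩ := exists_unitary_eq_mul_diagonal hMV
  refine ⟨U * star V, mul_mem hU (Unitary.star_mem hV), ?_⟩
  rw [msqrt_of_posSemidef hH]
  calc M = M * V * star V := by rw [mul_assoc, Unitary.mul_star_self_of_mem hV, mul_one]
    _ = U * star V * (V * diagonal (fun j => (√(hH.1.eigenvalues j) : ℂ)) * star V) := by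
      rw [hMVU, mul_assoc U (star V), ← mul_assoc (star V), ← mul_assoc (star V),
        Unitary.star_mul_self_of_mem hV, one_mul, mul_assoc]
    _ = _ := rfl

end Polar

section TraceBounds

variable {m : Type*} [Fintype m] [DecidableEq m]

lemma re_trace_unitary_mul_le {P W : Matrix m m ℂ} (hP : P.PosSemidef)
    (hW : W ∈ unitaryGroup m ℂ) : (W * P).trace.re ≤ P.trace.re := by
  set S := msqrt P
  have hS : Sᴴ = S := conjTranspose_msqrt P
  have hWP : (W * P).trace.re = inner ℝ (hsVec (S * Wᴴ)) (hsVec S) := by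
    rw [inner_hsVec, conjTranspose_mul, conjTranspose_conjTranspose, hS, mul_assoc,
      msqrt_mul_msqrt hP]
  calc (W * P).trace.re ≤ ‖hsVec (S * Wᴴ)‖ * ‖hsVec S‖ := hWP ▸ real_inner_le_norm _ _
    _ = ‖hsVec S‖ ^ 2 := by
      rw [norm_hsVec_mul_unitary S (show Wᴴ ∈ unitaryGroup m ℂ from Unitary.star_mem hW), sq]
    _ = P.trace.re := by rw [norm_hsVec_sq, hS, msqrt_mul_msqrt hP]

lemma re_trace_unitary_mul_le_trace_msqrt (M : Matrix m m ℂ) {W : Matrix m m ℂ}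
    (hW : W ∈ unitaryGroup m ℂ) : (W * M).trace.re ≤ (msqrt (Mᴴ * M)).trace.re := by
  obtain ⟨U, hU, hM⟩ := exists_unitary_eq_mul_msqrt M
  conv_lhs => rw [hM, ← mul_assoc]
  exact re_trace_unitary_mul_le (posSemidef_msqrt _) (mul_mem hW hU)

lemma exists_unitary_trace_mul_eq_trace_msqrt (M : Matrix m m ℂ) :
    ∃ W ∈ unitaryGroup m ℂ, (W * M).trace = (msqrt (Mᴴ * M)).trace := by
  obtain ⟨U, hU, hM⟩ := exists_unitary_eq_mul_msqrt M
  refine ⟨star U, Unitary.star_mem hU, ?_⟩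
  conv_lhs => rw [hM, ← mul_assoc, Unitary.star_mul_self_of_mem hU, one_mul]

end TraceBounds

open InnerProductGeometry in
lemma arccos_inner_le_arccos_inner_add {V : Type*} [NormedAddCommGroup V]
    [InnerProductSpace ℝ V] {x y z : V} (hx : ‖x‖ = 1) (hy : ‖y‖ = 1) (hz : ‖z‖ = 1) :
    Real.arccos (inner ℝ x z) ≤ Real.arccos (inner ℝ x y) + Real.arccos (inner ℝ y z) := by
  simpa [angle, hx, hy, hz] using angle_le_angle_add_angle x y z

section Purification

variable {m : Type*} [Fintype m] [DecidableEq m]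

noncomputable def purification (ρ U : Matrix m m ℂ) : EuclideanSpace ℂ (m × m) :=
  hsVec (msqrt ρ * U)

lemma norm_purification {ρ U : Matrix m m ℂ} (hρ : IsState ρ) (hU : U ∈ unitaryGroup m ℂ) :
    ‖purification ρ U‖ = 1 := by
  rw [purification, norm_hsVec_mul_unitary _ hU, ← sq_eq_sq₀ (norm_nonneg _) zero_le_one,
    one_pow, norm_hsVec_sq, conjTranspose_msqrt, msqrt_mul_msqrt hρ.1, hρ.2, Complex.one_re]

lemma inner_purification (ρ σ U V : Matrix m m ℂ) :
    inner ℝ (purification ρ U) (purification σ V) = (U * Vᴴ * (msqrt σ * msqrt ρ)).trace.re := by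
  rw [real_inner_comm, purification, purification, inner_hsVec, conjTranspose_mul,
    conjTranspose_msqrt, ← mul_assoc, trace_mul_comm]
  simp only [mul_assoc]

lemma fid_eq_re_trace_msqrt (ρ : Matrix m m ℂ) {σ : Matrix m m ℂ} (hσ : σ.PosSemidef) :
    fid ρ σ = (msqrt ((msqrt σ * msqrt ρ)ᴴ * (msqrt σ * msqrt ρ))).trace.re := by
  rw [conjTranspose_mul, conjTranspose_msqrt, conjTranspose_msqrt, mul_assoc,
    ← mul_assoc (msqrt σ), msqrt_mul_msqrt hσ, ← mul_assoc, fid]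

lemma inner_purification_le_fid (ρ : Matrix m m ℂ) {σ U V : Matrix m m ℂ} (hσ : σ.PosSemidef)
    (hU : U ∈ unitaryGroup m ℂ) (hV : V ∈ unitaryGroup m ℂ) :
    inner ℝ (purification ρ U) (purification σ V) ≤ fid ρ σ := by
  rw [inner_purification, fid_eq_re_trace_msqrt ρ hσ]
  exact re_trace_unitary_mul_le_trace_msqrt _ (mul_mem hU (Unitary.star_mem hV))

lemma exists_inner_purification_eq_fid (ρ : Matrix m m ℂ) {σ U : Matrix m m ℂ}
    (hσ : σ.PosSemidef) (hU : U ∈ unitaryGroup m ℂ) :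
    ∃ V ∈ unitaryGroup m ℂ, inner ℝ (purification ρ U) (purification σ V) = fid ρ σ := by
  obtain ⟨W, hW, hWM⟩ := exists_unitary_trace_mul_eq_trace_msqrt (msqrt σ * msqrt ρ)
  refine ⟨star W * U, mul_mem (Unitary.star_mem hW) hU, ?_⟩
  have hUV : U * (star W * U)ᴴ = W := by
    rw [← star_eq_conjTranspose, star_mul, star_star, ← mul_assoc,
      Unitary.mul_star_self_of_mem hU, one_mul]
  rw [inner_purification, hUV, hWM, fid_eq_re_trace_msqrt ρ hσ]

end Purification

theorem bures_angle_triangle_inequality {n : ℕ}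
    (ρ σ τ : Matrix (Fin n) (Fin n) ℂ)
    (hρ : IsState ρ) (hσ : IsState σ) (hτ : IsState τ) :
    Real.arccos (fid ρ τ) ≤ Real.arccos (fid ρ σ) + Real.arccos (fid σ τ) := by
  have h1 : (1 : Matrix (Fin n) (Fin n) ℂ) ∈ unitaryGroup (Fin n) ℂ := one_mem _
  obtain ⟨V, hV, hρσ⟩ := exists_inner_purification_eq_fid ρ hσ.1 h1
  obtain ⟨W, hW, hστ⟩ := exists_inner_purification_eq_fid σ hτ.1 hV
  have hx := norm_purification hρ h1
  have hy := norm_purification hσ hV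
  have hz := norm_purification hτ hW
  calc Real.arccos (fid ρ τ)
      ≤ Real.arccos (inner ℝ (purification ρ 1) (purification τ W)) :=
        Real.arccos_le_arccos (inner_purification_le_fid ρ hτ.1 h1 hW)
    _ ≤ Real.arccos (inner ℝ (purification ρ 1) (purification σ V)) +
          Real.arccos (inner ℝ (purification σ V) (purification τ W)) :=
        arccos_inner_le_arccos_inner_add hx hy hz
    _ = Real.arccos (fid ρ σ) + Real.arccos (fid σ τ) := by rw [hρσ, hστ]
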